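/- For gcd(n,k) = 1, n ≥ 3, 1 ≤ k < n, the number of cyclic permutations of {1,...,n} avoiding all substrings j(j+k mod n) for 1 ≤ j ≤ n equals Σ_{j=0}^{n-1} (-1)^j · C(n, j) · (n-j-1)! + (-1)^n. -/

import Mathlib

/-!
Since `gcd n k = 1`, the shift `c = (· + k)` is a single `n`-cycle, and the forbidden substrings
are exactly the pairs `a, c a`. By inclusion–exclusion over the set `S` of positions where `σ`
agrees with `c`, it suffices to count full cycles `σ` that agree with a full cycle `c` on `S`:
there are `(n - |S| - 1)!` of them. Indeed, deleting a point `s ∈ S` from the cycles of both `σ`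
and `c` (the predecessor of `s` is sent to `c s` instead) gives a bijection with the same problem
on `n - 1` points and `|S| - 1` constraints, and the unconstrained count `(n - 1)!` follows from
the same deletion, summed over the `n - 1` possible values of `σ s`.
-/

open Equiv Finset
open scoped Nat

theorem Nat.card_subtype_eq_sum_card_fiber {X Y : Type*} [Fintype X] [Fintype Y] [DecidableEq Y]
    (P : X → Prop) (f : X → Y) : Nat.card {x // P x} = ∑ y, Nat.card {x // P x ∧ f x = y} := by
  classical
  simp only [Nat.card_eq_fintype_card, Fintype.card_subtype]
  rw [card_eq_sum_card_fiberwise (f := f) (t := univ) fun _ _ => mem_coe.2 (mem_univ _)]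
  simp [filter_filter]

theorem Fin.val_nsmul {n : ℕ} [NeZero n] (m : ℕ) (g : Fin n) :
    ((m • g : Fin n) : ℕ) = m * g % n := by
  induction m with
  | zero => simp
  | succ m ih => rw [succ_nsmul, Fin.val_add, ih, Nat.mod_add_mod, Nat.succ_mul]

theorem Fin.mem_zmultiples_of_coprime {n k : ℕ} [NeZero n] (hkn : k < n) (hcop : Nat.Coprime n k)
    (x : Fin n) : x ∈ AddSubgroup.zmultiples (⟨k, hkn⟩ : Fin n) := by
  obtain ⟨m, -, hm⟩ := Nat.exists_mul_mod_eq_of_coprime x hcop.symm (NeZero.ne n)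
  convert AddSubgroup.nsmul_mem_zmultiples _ m
  rw [Fin.ext_iff, Fin.val_nsmul, mul_comm, hm, Nat.mod_eq_of_lt x.isLt]

namespace Equiv.Perm

variable {α : Type*}

/-- Unlike `IsCycle`, this includes the identity of a subsingleton type. -/
def IsFullCycle (σ : Perm α) : Prop := ∀ x y, σ.SameCycle x y

theorem isFullCycle_iff_exists_pow_apply_eq [Finite α] {σ : Perm α} :
    IsFullCycle σ ↔ ∀ x y, ∃ m : ℕ, (σ ^ m) x = y :=
  forall₂_congr fun _ _ => ⟨SameCycle.exists_nat_pow_eq, fun ⟨m, h⟩ => ⟨m, by simpa using h⟩⟩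

theorem isFullCycle_of_subsingleton [Subsingleton α] (σ : Perm α) : IsFullCycle σ :=
  fun x y => Subsingleton.elim x y ▸ SameCycle.refl σ x

theorem IsFullCycle.apply_ne [Nontrivial α] {σ : Perm α} (hσ : IsFullCycle σ) (x : α) :
    σ x ≠ x := fun hx => by
  obtain ⟨y, hy⟩ := exists_ne x
  obtain ⟨i, hi⟩ := hσ x y
  exact hy (hi ▸ zpow_apply_eq_self_of_apply_eq_self hx i)

theorem IsFullCycle.mem_of_mapsTo [Finite α] {σ : Perm α} (hσ : IsFullCycle σ) {A : Set α}
    (hA : Set.MapsTo σ A A) {x : α} (hx : x ∈ A) (y : α) : y ∈ A := by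
  obtain ⟨m, rfl⟩ := (hσ x y).exists_nat_pow_eq
  induction m with
  | zero => simpa
  | succ m ih => rw [pow_succ', mul_apply]; exact hA ih

theorem SameCycle.of_forall_sameCycle_apply [Finite α] {σ g : Perm α}
    (h : ∀ z, σ.SameCycle z (g z)) {x y : α} (hxy : g.SameCycle x y) : σ.SameCycle x y := by
  obtain ⟨m, rfl⟩ := hxy.exists_nat_pow_eq
  clear hxy
  induction m with
  | zero => exact SameCycle.refl σ x
  | succ m ih => rw [pow_succ', mul_apply]; exact ih.trans (h _)

theorem isFullCycle_addRight {G : Type*} [AddGroup G] {g : G}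
    (hg : ∀ x, x ∈ AddSubgroup.zmultiples g) : IsFullCycle (Equiv.addRight g) := by
  intro x y
  obtain ⟨i, hi⟩ := AddSubgroup.mem_zmultiples_iff.1 (hg (-x + y))
  exact ⟨i, by simp [hi]⟩

theorem card_isFullCycle_and_of_subsingleton [Subsingleton α] {P : Perm α → Prop} (hP : P 1) :
    Nat.card {σ : Perm α // IsFullCycle σ ∧ P σ} = 1 :=
  Nat.card_eq_one_iff_unique.2
    ⟨⟨fun _ _ => Subtype.ext (Subsingleton.elim _ _)⟩, ⟨⟨1, isFullCycle_of_subsingleton 1, hP⟩⟩⟩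

section eraseEquiv

variable [DecidableEq α]

/-- `swap s t * σ` fixes `s` and sends the `σ`-predecessor of `s` to `t`: it deletes `s` from
the cycle of `σ`. -/
def eraseEquiv (s t : α) : {σ : Perm α // σ s = t} ≃ Perm {x // x ≠ s} :=
  ((Equiv.mulLeft (swap s t)).subtypeEquiv fun σ => by simp [swap_apply_eq_iff]).trans
    (Perm.subtypeEquivSubtypePerm (· ≠ s)).symm

@[simp]
theorem eraseEquiv_apply_coe {s t : α} (σ : {σ : Perm α // σ s = t}) (x : {x // x ≠ s}) :
    (eraseEquiv s t σ x : α) = swap s t (σ.1 x) :=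
  rfl

theorem sameCycle_eraseEquiv_iff {s t : α} (σ : {σ : Perm α // σ s = t}) {x y : {x // x ≠ s}} :
    (eraseEquiv s t σ).SameCycle x y ↔ (swap s t * σ.1).SameCycle x y := by
  simp [eraseEquiv]

theorem isFullCycle_eraseEquiv_iff [Finite α] {s t : α} (hst : s ≠ t)
    (σ : {σ : Perm α // σ s = t}) : IsFullCycle (eraseEquiv s t σ) ↔ IsFullCycle σ.1 := by
  obtain ⟨σ, rfl⟩ := σ
  set f := swap s (σ s) * σ with hf
  have hf_apply : ∀ y, y ≠ s → σ y ≠ s → f y = σ y := fun y hy hσy =>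
    swap_apply_of_ne_of_ne hσy (σ.injective.ne hy)
  simp only [IsFullCycle, Subtype.forall, sameCycle_eraseEquiv_iff]
  constructor
  · intro h
    have hstep : ∀ z, σ.SameCycle z (f z) := by
      intro z
      by_cases hσz : σ z = s
      · rw [show f z = σ (σ z) by simp [hf, hσz], sameCycle_apply_right, sameCycle_apply_right]
      by_cases hz : z = s
      · simp only [hf, hz, mul_apply, swap_apply_right]
        exact SameCycle.refl σ s
      rw [hf_apply z hz hσz, sameCycle_apply_right]
    have key : ∀ y, σ.SameCycle (σ s) y := by
      intro y
      by_cases hy : y = s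
      · rw [hy, sameCycle_apply_left]
      exact SameCycle.of_forall_sameCycle_apply hstep (h _ hst.symm _ hy)
    exact fun x y => (key x).symm.trans (key y)
  · intro h
    -- `{s}` together with the `f`-cycle of `σ s` is `σ`-invariant, hence everything.
    have key : ∀ y, y = s ∨ f.SameCycle (σ s) y := by
      refine IsFullCycle.mem_of_mapsTo h (A := {y | y = s ∨ f.SameCycle (σ s) y}) ?_
        (.inr (.refl _ _))
      intro y hy
      by_cases hσy : σ y = s
      · exact .inl hσy
      by_cases hys : y = s
      · exact .inr (hys ▸ .refl _ _)
      exact .inr (hf_apply y hys hσy ▸ sameCycle_apply_right.2 (hy.resolve_left hys))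
    exact fun x hx y hy => ((key x).resolve_left hx).symm.trans ((key y).resolve_left hy)

theorem card_isFullCycle_apply_eq_and [Finite α] {s t : α} (hst : s ≠ t) (P : Perm α → Prop)
    (Q : Perm {x // x ≠ s} → Prop) (hPQ : ∀ σ, P σ.1 ↔ Q (eraseEquiv s t σ)) :
    Nat.card {σ : Perm α // IsFullCycle σ ∧ σ s = t ∧ P σ} =
      Nat.card {τ : Perm {x // x ≠ s} // IsFullCycle τ ∧ Q τ} :=
  Nat.card_congr <| (Equiv.subtypeSubtypeEquivSubtype fun h => h.2.1).symm.trans <|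
    (eraseEquiv s t).subtypeEquiv fun σ => by
      rw [isFullCycle_eraseEquiv_iff hst, ← hPQ]
      simp [σ.2]

end eraseEquiv

theorem card_isFullCycle [Fintype α] :
    Nat.card {σ : Perm α // IsFullCycle σ} = (Fintype.card α - 1)! := by
  refine Fintype.induction_subsingleton_or_nontrivial
    (P := fun α _ => Nat.card {σ : Perm α // IsFullCycle σ} = (Fintype.card α - 1)!) α ?_ ?_
  · intro α _ hα
    have := Fintype.card_le_one_iff_subsingleton.2 hα
    simpa [show Fintype.card α - 1 = 0 by omega] using
      card_isFullCycle_and_of_subsingleton (P := fun _ => True) trivial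
  intro α _ _ ih
  classical
  obtain ⟨s⟩ : Nonempty α := inferInstance
  have hfix : Nat.card {σ : Perm α // IsFullCycle σ ∧ σ s = s} = 0 :=
    Nat.card_eq_zero.2 (.inl ⟨fun σ => σ.2.1.apply_ne s σ.2.2⟩)
  have hcard : Fintype.card {x // x ≠ s} = Fintype.card α - 1 := by
    simp [Fintype.card_subtype_compl]
  have hfiber : ∀ t ∈ univ.erase s, Nat.card {σ : Perm α // IsFullCycle σ ∧ σ s = t} =
      (Fintype.card α - 1 - 1)! := fun t ht => by
    have := card_isFullCycle_apply_eq_and (ne_of_mem_erase ht).symm (fun _ => True)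
      (fun _ => True) fun _ => Iff.rfl
    simp only [and_true] at this
    rw [this, ih _ (by rw [hcard]; exact Nat.sub_lt Fintype.card_pos one_pos), hcard]
  rw [Nat.card_subtype_eq_sum_card_fiber _ fun σ => σ s, ← add_sum_erase _ _ (mem_univ s), hfix,
    zero_add, sum_congr rfl hfiber, sum_const, card_erase_of_mem (mem_univ s), card_univ,
    smul_eq_mul, Nat.mul_factorial_pred (by have := Fintype.one_lt_card (α := α); omega)]

/-- For `S = univ` the truncated subtraction gives `0! = 1`, counting `c` itself. -/
theorem card_isFullCycle_agreeOn [Fintype α] {c : Perm α} (hc : IsFullCycle c) (S : Finset α) :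
    Nat.card {σ : Perm α // IsFullCycle σ ∧ ∀ a ∈ S, σ a = c a} = (Fintype.card α - #S - 1)! := by
  classical
  induction hS : #S generalizing α with
  | zero => simpa [card_eq_zero.1 hS] using card_isFullCycle (α := α)
  | succ m ih =>
    rcases subsingleton_or_nontrivial α with hα | hα
    · have := Fintype.card_le_one_iff_subsingleton.2 hα
      rw [card_isFullCycle_and_of_subsingleton fun _ _ => Subsingleton.elim _ _,
        show Fintype.card α - (m + 1) - 1 = 0 by omega, Nat.factorial_zero]
    obtain ⟨s, hs⟩ : S.Nonempty := card_pos.1 (by omega)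
    have hcs : s ≠ c s := (hc.apply_ne s).symm
    set c' := eraseEquiv s (c s) ⟨c, rfl⟩
    have hagree : ∀ σ : {σ : Perm α // σ s = c s}, (∀ a ∈ S, σ.1 a = c a) ↔
        ∀ a ∈ S.subtype (· ≠ s), eraseEquiv s (c s) σ a = c' a := by
      intro σ
      simp only [mem_subtype, Subtype.ext_iff, eraseEquiv_apply_coe, c',
        EmbeddingLike.apply_eq_iff_eq, Subtype.forall]
      refine ⟨fun h a _ ha => h a ha, fun h a ha => ?_⟩
      by_cases has : a = s
      · exact has ▸ σ.2
      · exact h a has ha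
    have hS' : #(S.subtype (· ≠ s)) = m := by
      rw [card_subtype, filter_ne', card_erase_of_mem hs, hS, Nat.add_sub_cancel]
    calc Nat.card {σ : Perm α // IsFullCycle σ ∧ ∀ a ∈ S, σ a = c a}
        = Nat.card {σ : Perm α // IsFullCycle σ ∧ σ s = c s ∧ ∀ a ∈ S, σ a = c a} :=
          Nat.card_congr <| Equiv.subtypeEquivRight fun σ =>
            ⟨fun h => ⟨h.1, h.2 s hs, h.2⟩, fun h => ⟨h.1, h.2.2⟩⟩
      _ = Nat.card {τ // IsFullCycle τ ∧ ∀ a ∈ S.subtype (· ≠ s), τ a = c' a} :=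
          card_isFullCycle_apply_eq_and hcs _ _ hagree
      _ = (Fintype.card α - (m + 1) - 1)! := by
        rw [ih ((isFullCycle_eraseEquiv_iff hcs _).2 hc) _ hS']
        congr 1
        simp [Fintype.card_subtype_compl]
        omega

theorem card_and_forall_apply_ne_eq_sum [Fintype α] (P : Perm α → Prop) (c : Perm α) :
    (Nat.card {σ : Perm α // P σ ∧ ∀ a, σ a ≠ c a} : ℤ) =
      ∑ S ∈ univ.powerset, (-1) ^ #S * (Nat.card {σ : Perm α // P σ ∧ ∀ a ∈ S, σ a = c a} : ℤ) := by
  classical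
  have := inclusion_exclusion_sum_inf_compl univ (fun a => {σ : Perm α | σ a = c a})
    (fun σ => if P σ then (1 : ℤ) else 0)
  simp only [sum_boole, zsmul_eq_mul, Int.cast_pow, Int.cast_neg, Int.cast_one] at this
  simp only [Nat.card_eq_fintype_card, Fintype.card_subtype]
  convert this using 3 with S
  · rfl
  · ext σ; simp [mem_inf, and_comm]
  · congr 2; ext σ; simp [mem_inf, and_comm]

end Equiv.Perm

theorem Cstar_k_n_general (n k : ℕ) (hkn : k < n) (hcop : Nat.gcd n k = 1) :
    (Nat.card {σ : Equiv.Perm (Fin n) //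
        (∀ a b : Fin n, ∃ m : ℕ, (σ ^ m) a = b) ∧
        ∀ a : Fin n, ((σ a : ℕ)) ≠ ((a : ℕ) + k) % n} : ℤ) =
      ∑ j ∈ Finset.range n,
        (-1 : ℤ) ^ j * n.choose j * (n - j - 1).factorial + (-1 : ℤ) ^ n := by
  have : NeZero n := ⟨by omega⟩
  set c := Equiv.addRight (⟨k, hkn⟩ : Fin n)
  have hc : c.IsFullCycle := Perm.isFullCycle_addRight (Fin.mem_zmultiples_of_coprime hkn hcop)
  have hcond : ∀ σ : Perm (Fin n), ((∀ a b, ∃ m : ℕ, (σ ^ m) a = b) ∧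
      ∀ a, (σ a : ℕ) ≠ (a + k) % n) ↔ σ.IsFullCycle ∧ ∀ a, σ a ≠ c a := fun σ => by
    rw [Perm.isFullCycle_iff_exists_pow_apply_eq]
    simp [c, Fin.ext_iff, Fin.val_add]
  rw [Nat.card_congr (Equiv.subtypeEquivRight hcond), Perm.card_and_forall_apply_ne_eq_sum]
  simp_rw [Perm.card_isFullCycle_agreeOn hc]
  rw [sum_powerset_apply_card (fun j => (-1) ^ j * ((Fintype.card (Fin n) - j - 1)! : ℤ)),
    card_univ, Fintype.card_fin, sum_range_succ]
  congr 1
  · exact sum_congr rfl fun j _ => by rw [nsmul_eq_mul]; ring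
  · simp

/-- For `gcd(n,k)=1`, `n ≥ 3`, `1 ≤ k < n`, the number of cyclic permutations of
`{1,...,n}` avoiding all substrings `j(j+k mod n)`, `1 ≤ j ≤ n`, equals
`∑_{j=0}^{n-1} (-1)^j C(n,j) (n-j-1)! + (-1)^n`. Values 0-indexed; a cyclic permutation
is a single-orbit permutation `σ`, containing substring `ab` iff `σ a = b`. -/
theorem Cstar_k_n (n k : ℕ) (hk : 1 ≤ k) (hkn : k < n) (hn : 3 ≤ n)
    (hcop : Nat.gcd n k = 1) :
    (Nat.card {σ : Equiv.Perm (Fin n) //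
        (∀ a b : Fin n, ∃ m : ℕ, (σ ^ m) a = b) ∧
        ∀ a : Fin n, ((σ a : ℕ)) ≠ ((a : ℕ) + k) % n} : ℤ) =
      ∑ j ∈ Finset.range n,
        (-1 : ℤ) ^ j * n.choose j * (n - j - 1).factorial + (-1 : ℤ) ^ n :=
  Cstar_k_n_general n k hkn hcop
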